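/- arXiv:2005.09570 — 3 statements merged into one kernel-verified Lean document; each statement's English description precedes it below -/
import Mathlib

section
/- Let φ, ψ be two structural sets and f a C² function from ℝ³ to ℝ_{0,3}. Define ω(f) = Σᵢ φⁱ f ψⁱ. Then φ∂[ω(f)]ψ∂ = ω(φ∂ f ψ∂), where the two-sided operator is φ∂ f ψ∂ = Σ_{i,j} φⁱ (∂²f/∂xᵢ∂xⱼ) ψʲ. -/
/-!
Differentiation commutes with the linear map `ω(x) = Σₖ φᵏ x ψᵏ`, which is continuous because
`ℝ_{0,3}` is finite-dimensional (it is linearly isomorphic to the exterior algebra of `ℝ³`). Hence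
`φ∂ ω(f) ψ∂ = Σᵢⱼ φⁱ ω(Hᵢⱼ) ψʲ`, where `H` is the Hessian of `f`, symmetric since `f` is `C²`.
Substituting `φᵏφⁱ = -2δₖᵢ - φⁱφᵏ` and `ψʲψᵏ = -2δⱼₖ - ψᵏψʲ` gives the commutation rule
`ω(φⁱ x ψʲ) = φⁱ ω(x) ψʲ + 2 φⁱφʲ x - 2 x ψʲψⁱ`, and for symmetric `H` both correction sums
`Σᵢⱼ φⁱφʲ Hᵢⱼ` and `Σᵢⱼ Hᵢⱼ ψʲψⁱ` equal `-tr H`, so they cancel.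
-/
noncomputable section

abbrev V3 : Type := Fin 3 → ℝ

/-- The negative-definite quadratic form on `ℝ³`, so that `CliffordAlgebra Q3 = ℝ_{0,3}`. -/
def Q3 : QuadraticForm ℝ V3 := -(QuadraticMap.weightedSumSquares ℝ (fun _ : Fin 3 => (1:ℝ)))

/-- The real Clifford algebra `ℝ_{0,3}`. -/
abbrev Cl3 : Type := CliffordAlgebra Q3

namespace Cl3

def bCl : Module.Basis (Module.Free.ChooseBasisIndex ℝ Cl3) ℝ Cl3 := Module.Free.chooseBasis ℝ Cl3

def toLp : Cl3 →ₗ[ℝ] lp (fun _ : Module.Free.ChooseBasisIndex ℝ Cl3 => ℝ) ⊤ where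
  toFun x := ⟨fun i => bCl.repr x i, by
    apply memℓp_infty
    have h1 : (Set.range ((bCl.repr x) : _ → ℝ)).Finite := by
      apply Set.Finite.subset (((bCl.repr x).frange : Finset ℝ).finite_toSet.insert 0)
      rintro y ⟨i, rfl⟩
      by_cases h : (bCl.repr x) i = 0
      · simp [h]
      · exact Set.mem_insert_of_mem _ (by
          simp only [Finset.mem_coe, Finsupp.mem_frange]
          exact ⟨h, i, rfl⟩)
    have h2 : (Set.range fun i => ‖(bCl.repr x) i‖).Finite := by
      have := h1.image norm
      apply this.subset
      rintro y ⟨i, rfl⟩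
      exact ⟨(bCl.repr x) i, ⟨i, rfl⟩, rfl⟩
    exact h2.bddAbove⟩
  map_add' x y := by ext i; simp; rfl
  map_smul' c x := by ext i; simp

lemma toLp_injective : Function.Injective toLp := by
  intro x y h
  apply bCl.repr.injective
  ext i
  exact congrFun (congrArg Subtype.val h) i

instance : NormedAddCommGroup Cl3 := NormedAddCommGroup.induced Cl3 _ toLp toLp_injective
instance : NormedSpace ℝ Cl3 := NormedSpace.induced ℝ Cl3 _ toLp

end Cl3

/-- Embedding of vectors `ℝ³ ⊂ ℝ_{0,3}`. -/
def ι3 : V3 →ₗ[ℝ] Cl3 := CliffordAlgebra.ι Q3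

/-- `ψ` is a structural set: `ψⁱψʲ + ψʲψⁱ = -2δᵢⱼ` inside `ℝ_{0,3}`. -/
def StructuralSet (ψ : Fin 3 → V3) : Prop :=
  ∀ i j, ι3 (ψ i) * ι3 (ψ j) + ι3 (ψ j) * ι3 (ψ i)
      = algebraMap ℝ Cl3 (if i = j then -2 else 0)

/-- Partial derivative `∂f/∂xᵢ`. -/
def pd (i : Fin 3) (f : V3 → Cl3) : V3 → Cl3 := fun x => fderiv ℝ f x (Pi.single i 1)

/-- Left Dirac operator `ψ∂ f = Σᵢ ψⁱ ∂f/∂xᵢ`. -/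
def DL (ψ : Fin 3 → V3) (f : V3 → Cl3) : V3 → Cl3 := fun x => ∑ i, ι3 (ψ i) * pd i f x

/-- Right Dirac operator `f ψ∂ = Σᵢ (∂f/∂xᵢ) ψⁱ`. -/
def DR (ψ : Fin 3 → V3) (f : V3 → Cl3) : V3 → Cl3 := fun x => ∑ i, pd i f x * ι3 (ψ i)

/-- Two-sided operator `φ∂ f ψ∂ = Σᵢⱼ φⁱ (∂²f/∂xᵢ∂xⱼ) ψʲ`. -/
def DLR (φ ψ : Fin 3 → V3) (f : V3 → Cl3) : V3 → Cl3 :=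
  fun x => ∑ i, ∑ j, ι3 (φ i) * pd i (pd j f) x * ι3 (ψ j)

/-- Componentwise Laplacian. -/
def lap (f : V3 → Cl3) : V3 → Cl3 := fun x => ∑ i, pd i (pd i f) x

/-- `ν(a) = Σᵢ ψⁱ a ψⁱ`. -/
def nu (ψ : Fin 3 → V3) (a : Cl3) : Cl3 := ∑ i, ι3 (ψ i) * a * ι3 (ψ i)

/-- `ω(a) = Σᵢ φⁱ a ψⁱ`. -/
def om (φ ψ : Fin 3 → V3) (a : Cl3) : Cl3 := ∑ i, ι3 (φ i) * a * ι3 (ψ i)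

/-- `x_ψ = Σᵢ ψⁱ xᵢ`. -/
def xPsi (ψ : Fin 3 → V3) (x : V3) : Cl3 := ∑ i, x i • ι3 (ψ i)

open Finset

instance ExteriorAlgebra.instModuleFinite {K M : Type*} [Field K] [AddCommGroup M] [Module K M]
    [FiniteDimensional K M] : Module.Finite K (ExteriorAlgebra K M) := by
  have htop : ⨆ n ∈ range (Module.finrank K M + 1), ⋀[K]^n M = ⊤ := by
    rw [eq_top_iff, ← CliffordAlgebra.iSup_ι_range_eq_top (Q := (0 : QuadraticForm K M))]
    refine iSup_le fun n => ?_
    rcases le_or_gt n (Module.finrank K M) with hn | hn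
    · exact le_biSup (fun n => ⋀[K]^n M) (mem_range_succ_iff.2 hn)
    · have hdim : Module.finrank K (⋀[K]^n M) = 0 := by
        rw [exteriorPower.finrank_eq, Nat.choose_eq_zero_of_lt hn]
      exact (Submodule.finrank_eq_zero.1 hdim).le.trans bot_le
  rw [Module.finite_def, ← htop]
  exact Submodule.fg_biSup _ _ fun n _ => Module.Finite.iff_fg.1 inferInstance

instance CliffordAlgebra.instModuleFinite {K M : Type*} [Field K] [Invertible (2 : K)]
    [AddCommGroup M] [Module K M] [FiniteDimensional K M] (Q : QuadraticForm K M) :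
    Module.Finite K (CliffordAlgebra Q) :=
  Module.Finite.equiv (CliffordAlgebra.equivExterior Q).symm

section StructuralFamily

variable {R ι : Type*} [Ring R] [Fintype ι] [DecidableEq ι] {a b : ι → R} {A : ι → ι → R}

def IsStructuralFamily (a : ι → R) : Prop :=
  ∀ i j, a i * a j + a j * a i = if i = j then -2 else 0

def sandwich (a b : ι → R) (x : R) : R := ∑ k, a k * x * b k

theorem IsStructuralFamily.two_mul_sum_sum_mul_mul (ha : IsStructuralFamily a)
    (hA : ∀ i j, A i j = A j i) :
    2 * ∑ i, ∑ j, a i * a j * A i j = -2 * ∑ i, A i i := by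
  calc 2 * ∑ i, ∑ j, a i * a j * A i j
      = ∑ i, ∑ j, a i * a j * A i j + ∑ i, ∑ j, a j * a i * A i j := by
        rw [two_mul, sum_comm (f := fun i j => a j * a i * A i j)]
        simp only [hA]
    _ = ∑ i, ∑ j, (if i = j then -2 else 0) * A i j := by
        simp only [← sum_add_distrib, ← add_mul, ha _ _]
    _ = -2 * ∑ i, A i i := by simp [ite_mul, mul_sum]

theorem IsStructuralFamily.two_mul_sum_sum_mul_mul_right (hb : IsStructuralFamily b)
    (hA : ∀ i j, A i j = A j i) :
    2 * ∑ i, ∑ j, A i j * (b j * b i) = -2 * ∑ i, A i i := by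
  calc 2 * ∑ i, ∑ j, A i j * (b j * b i)
      = ∑ i, ∑ j, A i j * (b j * b i) + ∑ i, ∑ j, A i j * (b i * b j) := by
        rw [two_mul, sum_comm (f := fun i j => A i j * (b i * b j))]
        simp only [hA]
    _ = ∑ i, ∑ j, A i j * (if j = i then -2 else 0) := by
        simp only [← sum_add_distrib, ← mul_add, hb _ _]
    _ = -2 * ∑ i, A i i := by simp [mul_ite, mul_sum, mul_two, two_mul]

theorem sandwich_mul_mul (ha : IsStructuralFamily a) (hb : IsStructuralFamily b) (i j : ι)
    (x : R) :
    sandwich a b (a i * x * b j) + 2 * (x * (b j * b i))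
      = a i * sandwich a b x * b j + 2 * (a i * a j * x) := by
  have hk : ∀ k, a k * (a i * x * b j) * b k - a i * (a k * x * b k) * b j
      = (if k = i then -2 else 0) * (x * (b j * b k))
        - a i * a k * x * (if j = k then -2 else 0) := by
    intro k
    rw [← ha k i, ← hb j k]
    noncomm_ring
  have hsum := sum_congr rfl fun k (_ : k ∈ univ) => hk k
  simp only [sum_sub_distrib, ite_mul, mul_ite, zero_mul, mul_zero, sum_ite_eq', sum_ite_eq,
    mem_univ, if_true] at hsum
  rw [sandwich, sandwich, mul_sum, sum_mul, sub_eq_iff_eq_add.1 hsum]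
  noncomm_ring

theorem sum_sum_mul_sandwich_mul (ha : IsStructuralFamily a) (hb : IsStructuralFamily b)
    (hA : ∀ i j, A i j = A j i) :
    ∑ i, ∑ j, a i * sandwich a b (A i j) * b j
      = sandwich a b (∑ i, ∑ j, a i * A i j * b j) := by
  have h := congrArg (fun f => ∑ i, ∑ j, f i j) <|
    funext₂ fun i j => sandwich_mul_mul ha hb i j (A i j)
  simp only [sum_add_distrib, ← mul_sum, ha.two_mul_sum_sum_mul_mul hA,
    hb.two_mul_sum_sum_mul_mul_right hA, add_left_inj] at h
  rw [← h]
  simp only [sandwich, mul_sum, sum_mul]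
  exact (sum_congr rfl fun i _ => sum_comm).trans sum_comm

end StructuralFamily

theorem StructuralSet.isStructuralFamily {φ : Fin 3 → V3} (hφ : StructuralSet φ) :
    IsStructuralFamily fun i => ι3 (φ i) := by
  intro i j
  rw [hφ i j, apply_ite (algebraMap ℝ Cl3), map_neg, map_ofNat, map_zero]

def omCLM (φ ψ : Fin 3 → V3) : Cl3 →L[ℝ] Cl3 :=
  LinearMap.toContinuousLinearMap (∑ k, LinearMap.mulLeftRight ℝ (ι3 (φ k), ι3 (ψ k)))

theorem omCLM_apply (φ ψ : Fin 3 → V3) (a : Cl3) : omCLM φ ψ a = om φ ψ a := by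
  simp [omCLM, om]

theorem pd_clm_comp (L : Cl3 →L[ℝ] Cl3) {g : V3 → Cl3} {x : V3} (hg : DifferentiableAt ℝ g x)
    (i : Fin 3) : pd i (fun y => L (g y)) x = L (pd i g x) := by
  change fderiv ℝ (L ∘ g) x _ = _
  rw [(L.hasFDerivAt.comp x hg.hasFDerivAt).fderiv]
  rfl

theorem pd_pd_eq_fderiv_fderiv {f : V3 → Cl3} (hf : ContDiff ℝ 2 f) (i j : Fin 3) (x : V3) :
    pd i (pd j f) x = fderiv ℝ (fderiv ℝ f) x (Pi.single i 1) (Pi.single j 1) := by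
  have hdf : DifferentiableAt ℝ (fderiv ℝ f) x :=
    (hf.fderiv_right (m := 1) (by norm_num)).differentiable (by norm_num) x
  change fderiv ℝ (fun y => fderiv ℝ f y (Pi.single j 1)) x (Pi.single i 1) = _
  rw [fderiv_clm_apply hdf (differentiableAt_const _)]
  simp

theorem pd_pd_comm {f : V3 → Cl3} (hf : ContDiff ℝ 2 f) (i j : Fin 3) (x : V3) :
    pd i (pd j f) x = pd j (pd i f) x := by
  rw [pd_pd_eq_fderiv_fderiv hf, pd_pd_eq_fderiv_fderiv hf]
  exact hf.contDiffAt.isSymmSndFDerivAt (by simp) _ _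

theorem pd_pd_clm_comp (L : Cl3 →L[ℝ] Cl3) {f : V3 → Cl3} (hf : ContDiff ℝ 2 f) (i j : Fin 3)
    (x : V3) : pd i (pd j (fun y => L (f y))) x = L (pd i (pd j f) x) := by
  have hpd : ContDiff ℝ 1 (pd j f) :=
    (hf.fderiv_right (m := 1) (by norm_num)).clm_apply contDiff_const
  have hcomp : pd j (fun y => L (f y)) = fun y => L (pd j f y) :=
    funext fun y => pd_clm_comp L (hf.differentiable (by norm_num) y) j
  rw [hcomp, pd_clm_comp L (hpd.differentiable (by norm_num) x)]

/-- `φ∂[ω(f)]ψ∂ = ω(φ∂ f ψ∂)` where `ω(f) = Σᵢ φⁱ f ψⁱ`. -/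
theorem stmt5 (φ ψ : Fin 3 → V3) (hφ : StructuralSet φ) (hψ : StructuralSet ψ)
    (f : V3 → Cl3) (hf : ContDiff ℝ 2 f) :
    ∀ x, DLR φ ψ (fun y => om φ ψ (f y)) x = om φ ψ (DLR φ ψ f x) := by
  intro x
  simp only [DLR, ← omCLM_apply, pd_pd_clm_comp _ hf]
  simp only [omCLM_apply]
  exact sum_sum_mul_sandwich_mul hφ.isStructuralFamily hψ.isStructuralFamily
    fun i j => pd_pd_comm hf i j x
end
end

section
/- Let φ, ψ be structural sets and α, β real with α ≠ 0 and α² ≠ β². If u is a C³ function from an open set Ω ⊆ ℝ³ to ℝ_{0,3} that is harmonic (Δu = 0) or (φ,ψ)-inframonogenic (φ∂ u ψ∂ = 0), then w = u ψ∂ − (β/α) ψ∂ u satisfies the generalized Lamé–Navier system α(φ∂ w ψ∂) + β(φ∂ ψ∂ w) = 0 in Ω. -/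
noncomputable section

/-! Write `∂ᵢ∂ⱼ∂ₖu` for the (symmetric) third derivatives of `u`. The anticommutation relations of
`ψ` contract a symmetric pair of indices against `ψᵏψʲ` or `ψʲψᵏ` to minus its trace, so both
`φ∂ w ψ∂` and `φ∂ψ∂ w` are combinations of `φ∂Δu` and of `Σ φⁱψʲ (∂ᵢ∂ⱼ∂ₖu) ψᵏ`; the latter cancels
in `α(φ∂ w ψ∂) + β(φ∂ψ∂ w)` because `α · (β/α) = β`, leaving `(β²/α - α) φ∂Δu`. It remains to see
that `φ∂Δu = 0`: directly if `u` is harmonic, and via `(φ∂ u ψ∂)ψ∂ = -φ∂Δu` if `u` is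
inframonogenic. -/

open Filter Topology

-- Finite-dimensionality makes left and right multiplication continuous, so they commute with `pd`.
instance : Module.Finite ℝ Cl3 :=
  have : Module.Finite ℝ (ExteriorAlgebra ℝ V3) :=
    .of_basis (Pi.basisFun ℝ (Fin 3)).ExteriorAlgebra
  .equiv (CliffordAlgebra.equivExterior Q3).symm

def mulLeftL (a : Cl3) : Cl3 →L[ℝ] Cl3 := (LinearMap.mulLeft ℝ a).toContinuousLinearMap

def mulRightL (a : Cl3) : Cl3 →L[ℝ] Cl3 := (LinearMap.mulRight ℝ a).toContinuousLinearMap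

@[simp] lemma mulLeftL_apply (a b : Cl3) : mulLeftL a b = a * b := rfl

@[simp] lemma mulRightL_apply (a b : Cl3) : mulRightL a b = b * a := rfl

section Calculus

variable {f g : V3 → Cl3} {x : V3} {Ω : Set V3}

lemma pd_congr (h : f =ᶠ[𝓝 x] g) (i : Fin 3) : pd i f x = pd i g x := by
  rw [pd, pd, h.fderiv_eq]

lemma pd_clm (L : Cl3 →L[ℝ] Cl3) (hf : DifferentiableAt ℝ f x) (i : Fin 3) :
    pd i (fun y => L (f y)) x = L (pd i f x) := by
  have hL : HasFDerivAt (fun y => L (f y)) (L.comp (fderiv ℝ f x)) x :=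
    L.hasFDerivAt.comp x hf.hasFDerivAt
  rw [pd, pd, hL.fderiv]
  rfl

lemma pd_sum {ι : Type*} [Fintype ι] {f : ι → V3 → Cl3} (hf : ∀ k, DifferentiableAt ℝ (f k) x)
    (i : Fin 3) : pd i (fun y => ∑ k, f k y) x = ∑ k, pd i (f k) x := by
  simp [pd, fderiv_fun_sum fun k _ => hf k]

lemma pd_sum_clm {ι : Type*} [Fintype ι] (L : ι → Cl3 →L[ℝ] Cl3) {f : ι → V3 → Cl3}
    (hf : ∀ k, DifferentiableAt ℝ (f k) x) (i : Fin 3) :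
    pd i (fun y => ∑ k, L k (f k y)) x = ∑ k, L k (pd i (f k) x) := by
  rw [pd_sum (f := fun k y => L k (f k y)) fun k => (L k).differentiableAt.comp x (hf k)]
  exact Finset.sum_congr rfl fun k _ => pd_clm (L k) (hf k) i

lemma contDiffOn_pd {m n : WithTop ℕ∞} (hf : ContDiffOn ℝ n f Ω) (hΩ : IsOpen Ω)
    (hmn : m + 1 ≤ n) (i : Fin 3) : ContDiffOn ℝ m (pd i f) Ω :=
  (hf.fderiv_of_isOpen hΩ hmn).clm_apply contDiffOn_const

lemma differentiableAt_pd (hf : ContDiffOn ℝ 2 f Ω) (hΩ : IsOpen Ω) (hx : x ∈ Ω) (i : Fin 3) :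
    DifferentiableAt ℝ (pd i f) x :=
  ((contDiffOn_pd hf hΩ le_rfl i).contDiffAt (hΩ.mem_nhds hx)).differentiableAt one_ne_zero

lemma pd_comm (hf : ContDiffAt ℝ 2 f x) (i j : Fin 3) : pd i (pd j f) x = pd j (pd i f) x := by
  have hdf : DifferentiableAt ℝ (fderiv ℝ f) x :=
    (hf.fderiv_right (m := 1) le_rfl).differentiableAt one_ne_zero
  have hpd : ∀ a b : Fin 3,
      pd a (pd b f) x = fderiv ℝ (fderiv ℝ f) x (Pi.single a 1) (Pi.single b 1) := by
    intro a b
    change fderiv ℝ (fun y => fderiv ℝ f y (Pi.single b 1)) x (Pi.single a 1) = _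
    simp [fderiv_clm_apply hdf (differentiableAt_const _)]
  rw [hpd, hpd, (hf.isSymmSndFDerivAt (by simp)).eq]

end Calculus

section Contraction

variable {ι A : Type*} [Fintype ι] [DecidableEq ι] [Ring A] [Algebra ℝ A] {b : ι → A}

lemma sum_sum_map_mul_anticomm {B : Type*} [AddCommGroup B] [Module ℝ B]
    (hb : ∀ i j, b i * b j + b j * b i = algebraMap ℝ A (if i = j then -2 else 0))
    (Φ : ι → ι → A →ₗ[ℝ] B) (hΦ : ∀ j k, Φ j k = Φ k j) :
    ∑ j, ∑ k, Φ j k (b j * b k) = -∑ j, Φ j j 1 := by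
  have hswap : ∑ j, ∑ k, Φ j k (b k * b j) = ∑ j, ∑ k, Φ j k (b j * b k) := by
    rw [Finset.sum_comm]
    simp_rw [hΦ]
  refine smul_right_injective B (two_ne_zero (α := ℝ)) ?_
  calc (2 : ℝ) • ∑ j, ∑ k, Φ j k (b j * b k)
      = ∑ j, ∑ k, Φ j k (b j * b k + b k * b j) := by
        simp only [two_smul, map_add, Finset.sum_add_distrib, hswap]
    _ = ∑ j, ∑ k, (if j = k then -2 else 0 : ℝ) • Φ j k 1 := by
        simp_rw [hb, Algebra.algebraMap_eq_smul_one, map_smul]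
    _ = (2 : ℝ) • -∑ j, Φ j j 1 := by
        simp [ite_smul, Finset.smul_sum]

lemma sum_sum_mul_mul_anticomm_right
    (hb : ∀ i j, b i * b j + b j * b i = algebraMap ℝ A (if i = j then -2 else 0))
    {S : ι → ι → A} (hS : ∀ j k, S j k = S k j) :
    ∑ j, ∑ k, S j k * b k * b j = -∑ j, S j j := by
  have h := sum_sum_map_mul_anticomm hb (fun j k => LinearMap.mulLeft ℝ (S j k))
    fun j k => by rw [hS]
  simp only [LinearMap.mulLeft_apply, mul_one] at h
  rw [← h, Finset.sum_comm]
  simp_rw [hS, mul_assoc]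

lemma sum_sum_mul_mul_anticomm_left
    (hb : ∀ i j, b i * b j + b j * b i = algebraMap ℝ A (if i = j then -2 else 0))
    {S : ι → ι → A} (hS : ∀ j k, S j k = S k j) :
    ∑ j, ∑ k, b j * b k * S j k = -∑ j, S j j := by
  simpa using sum_sum_map_mul_anticomm hb (fun j k => LinearMap.mulRight ℝ (S j k))
    fun j k => by rw [hS]

lemma lameNavier_combination
    (hb : ∀ i j, b i * b j + b j * b i = algebraMap ℝ A (if i = j then -2 else 0))
    {S : ι → ι → A} (hS : ∀ j k, S j k = S k j) {α β c : ℝ} (hc : α * c = β) :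
    α • ∑ j, (∑ k, (S j k * b k - c • (b k * S j k))) * b j
      + β • ∑ j, b j * ∑ k, (S j k * b k - c • (b k * S j k))
      = (β * c - α) • ∑ j, S j j := by
  have hmiddle : ∑ j, ∑ k, b k * S j k * b j = ∑ j, ∑ k, b j * S j k * b k := by
    rw [Finset.sum_comm]
    simp_rw [hS]
  have h1 : ∑ j, (∑ k, (S j k * b k - c • (b k * S j k))) * b j
      = ∑ j, ∑ k, S j k * b k * b j - c • ∑ j, ∑ k, b k * S j k * b j := by
    simp only [Finset.sum_mul, sub_mul, smul_mul_assoc, Finset.sum_sub_distrib, Finset.smul_sum]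
  have h2 : ∑ j, b j * ∑ k, (S j k * b k - c • (b k * S j k))
      = ∑ j, ∑ k, b j * S j k * b k - c • ∑ j, ∑ k, b j * b k * S j k := by
    simp only [Finset.mul_sum, mul_sub, mul_smul_comm, Finset.sum_sub_distrib, Finset.smul_sum,
      mul_assoc]
  rw [h1, h2, sum_sum_mul_mul_anticomm_right hb hS, sum_sum_mul_mul_anticomm_left hb hS, hmiddle,
    ← hc]
  module

end Contraction

section DiracOperators

variable {φ ψ : Fin 3 → V3} {f u : V3 → Cl3} {x : V3} {Ω : Set V3}

lemma pd_eq_zero_of_eqOn (hΩ : IsOpen Ω) (hx : x ∈ Ω) (h : ∀ y ∈ Ω, f y = 0) (i : Fin 3) :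
    pd i f x = 0 := by
  have hf : f =ᶠ[𝓝 x] fun _ => 0 := eventually_of_mem (hΩ.mem_nhds hx) h
  rw [pd_congr hf]
  simp [pd]

lemma DL_eq_zero_of_eqOn (hΩ : IsOpen Ω) (hx : x ∈ Ω) (h : ∀ y ∈ Ω, f y = 0) : DL ψ f x = 0 := by
  simp [DL, pd_eq_zero_of_eqOn hΩ hx h]

lemma DR_eq_zero_of_eqOn (hΩ : IsOpen Ω) (hx : x ∈ Ω) (h : ∀ y ∈ Ω, f y = 0) : DR ψ f x = 0 := by
  simp [DR, pd_eq_zero_of_eqOn hΩ hx h]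

lemma pd_DL (hf : ∀ k, DifferentiableAt ℝ (pd k f) x) (i : Fin 3) :
    pd i (DL ψ f) x = ∑ k, ι3 (ψ k) * pd i (pd k f) x :=
  pd_sum_clm (fun k => mulLeftL (ι3 (ψ k))) hf i

lemma pd_lap (hf : ∀ k, DifferentiableAt ℝ (pd k (pd k f)) x) (i : Fin 3) :
    pd i (lap f) x = ∑ k, pd i (pd k (pd k f)) x :=
  pd_sum hf i

lemma pd_DLR (hf : ∀ j k, DifferentiableAt ℝ (pd j (pd k f)) x) (i : Fin 3) :
    pd i (DLR φ ψ f) x = ∑ j, ∑ k, ι3 (φ j) * pd i (pd j (pd k f)) x * ι3 (ψ k) := by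
  have h := pd_sum_clm
    (fun jk : Fin 3 × Fin 3 => (mulRightL (ι3 (ψ jk.2))).comp (mulLeftL (ι3 (φ jk.1))))
    (fun jk => hf jk.1 jk.2) i
  simp only [Fintype.sum_prod_type, ContinuousLinearMap.comp_apply, mulLeftL_apply,
    mulRightL_apply] at h
  exact h

lemma pd_eventuallyEq_sum_clm {ι : Type*} [Fintype ι] (L : ι → Cl3 →L[ℝ] Cl3)
    {f : ι → V3 → Cl3} (hΩ : IsOpen Ω) (hx : x ∈ Ω) (hf : ∀ k, ∀ y ∈ Ω, DifferentiableAt ℝ (f k) y)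
    (i : Fin 3) : pd i (fun y => ∑ k, L k (f k y)) =ᶠ[𝓝 x] fun y => ∑ k, L k (pd i (f k) y) :=
  eventually_of_mem (hΩ.mem_nhds hx) fun y hy => pd_sum_clm L (fun k => hf k y hy) i

lemma pd_pd_pd_comm₁₂ (hΩ : IsOpen Ω) (hu : ContDiffOn ℝ 3 u Ω) (hx : x ∈ Ω) (i j k : Fin 3) :
    pd i (pd j (pd k u)) x = pd j (pd i (pd k u)) x :=
  pd_comm ((contDiffOn_pd hu hΩ (by norm_num) k).contDiffAt (hΩ.mem_nhds hx)) i j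

lemma pd_pd_pd_comm₂₃ (hΩ : IsOpen Ω) (hu : ContDiffOn ℝ 3 u Ω) (hx : x ∈ Ω) (i j k : Fin 3) :
    pd i (pd j (pd k u)) x = pd i (pd k (pd j u)) x :=
  pd_congr (eventually_of_mem (hΩ.mem_nhds hx) fun y hy =>
    pd_comm ((hu.contDiffAt (hΩ.mem_nhds hy)).of_le (by norm_num)) j k) i

end DiracOperators

section LameNavier

variable {φ ψ : Fin 3 → V3} {u : V3 → Cl3} {x : V3} {Ω : Set V3}

lemma DR_DLR_eq_neg_DL_lap (hψ : StructuralSet ψ) (hΩ : IsOpen Ω) (hu : ContDiffOn ℝ 3 u Ω)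
    (hx : x ∈ Ω) : DR ψ (DLR φ ψ u) x = -DL φ (lap u) x := by
  have hd : ∀ j k, DifferentiableAt ℝ (pd j (pd k u)) x := fun j k =>
    differentiableAt_pd (contDiffOn_pd hu hΩ (by norm_num) k) hΩ hx j
  calc DR ψ (DLR φ ψ u) x
      = ∑ j, (∑ i, ∑ k, ι3 (φ i) * pd j (pd i (pd k u)) x * ι3 (ψ k)) * ι3 (ψ j) := by
        simp only [DR, pd_DLR hd]
    _ = ∑ i, ι3 (φ i) * ∑ j, ∑ k, pd i (pd j (pd k u)) x * ι3 (ψ k) * ι3 (ψ j) := by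
        simp only [Finset.sum_mul, Finset.mul_sum]
        rw [Finset.sum_comm]
        refine Finset.sum_congr rfl fun i _ => Finset.sum_congr rfl fun j _ =>
          Finset.sum_congr rfl fun k _ => ?_
        rw [pd_pd_pd_comm₁₂ hΩ hu hx j i k]
        simp only [mul_assoc]
    _ = ∑ i, ι3 (φ i) * -∑ j, pd i (pd j (pd j u)) x := by
        simp only [sum_sum_mul_mul_anticomm_right hψ (pd_pd_pd_comm₂₃ hΩ hu hx _)]
    _ = -DL φ (lap u) x := by
        simp [DL, pd_lap fun k => hd k k]

lemma lameNavier_eq_smul_DL_lap (hψ : StructuralSet ψ) (hΩ : IsOpen Ω) (hu : ContDiffOn ℝ 3 u Ω)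
    (hx : x ∈ Ω) {α β c : ℝ} (hc : α * c = β) {w : V3 → Cl3}
    (hw : w = fun y => DR ψ u y - c • DL ψ u y) :
    α • DLR φ ψ w x + β • DL φ (DL ψ w) x = (β * c - α) • DL φ (lap u) x := by
  set T : Fin 3 → Cl3 →L[ℝ] Cl3 := fun k => mulRightL (ι3 (ψ k)) - c • mulLeftL (ι3 (ψ k))
  have hwT : w = fun y => ∑ k, T k (pd k u y) := by
    subst hw
    funext y
    simp [T, DR, DL, Finset.sum_sub_distrib, Finset.smul_sum]
  have hd : ∀ j k, ∀ y ∈ Ω, DifferentiableAt ℝ (pd j (pd k u)) y := fun j k y hy =>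
    differentiableAt_pd (contDiffOn_pd hu hΩ (by norm_num) k) hΩ hy j
  have hpdw : ∀ j, pd j w =ᶠ[𝓝 x] fun y => ∑ k, T k (pd j (pd k u) y) := fun j => by
    rw [hwT]
    exact pd_eventuallyEq_sum_clm T hΩ hx
      (fun k y hy => differentiableAt_pd (hu.of_le (by norm_num)) hΩ hy k) j
  have hdw : ∀ j, DifferentiableAt ℝ (pd j w) x := fun j =>
    (DifferentiableAt.fun_sum fun k _ =>
      (T k).differentiableAt.comp x (hd j k x hx)).congr_of_eventuallyEq (hpdw j)
  have hW : ∀ i j, pd i (pd j w) x = ∑ k, (pd i (pd j (pd k u)) x * ι3 (ψ k)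
      - c • (ι3 (ψ k) * pd i (pd j (pd k u)) x)) := fun i j => by
    rw [pd_congr (hpdw j), pd_sum_clm T (fun k => hd j k x hx)]
    simp [T]
  calc α • DLR φ ψ w x + β • DL φ (DL ψ w) x
      = ∑ i, ι3 (φ i) * (α • ∑ j, pd i (pd j w) x * ι3 (ψ j)
          + β • ∑ j, ι3 (ψ j) * pd i (pd j w) x) := by
        simp only [DLR, DL, pd_DL hdw, Finset.mul_sum, Finset.smul_sum, mul_add, mul_smul_comm,
          mul_assoc, Finset.sum_add_distrib]
    _ = ∑ i, ι3 (φ i) * ((β * c - α) • ∑ j, pd i (pd j (pd j u)) x) := by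
        simp only [hW, lameNavier_combination hψ (pd_pd_pd_comm₂₃ hΩ hu hx _) hc]
    _ = (β * c - α) • DL φ (lap u) x := by
        simp [DL, pd_lap fun k => hd k k x hx, Finset.smul_sum, Finset.mul_sum]

end LameNavier

theorem stmt16_general (φ ψ : Fin 3 → V3) (hψ : StructuralSet ψ)
    (α β : ℝ) (hα : α ≠ 0)
    (Ω : Set V3) (hΩ : IsOpen Ω) (u : V3 → Cl3) (hu : ContDiffOn ℝ 3 u Ω)
    (hcase : (∀ x ∈ Ω, lap u x = 0) ∨ (∀ x ∈ Ω, DLR φ ψ u x = 0))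
    (w : V3 → Cl3) (hw : w = fun x => DR ψ u x - (β / α) • DL ψ u x) :
    ∀ x ∈ Ω, α • DLR φ ψ w x + β • DL φ (DL ψ w) x = 0 := by
  intro x hx
  have hDL_lap : DL φ (lap u) x = 0 := by
    rcases hcase with hharm | hinfra
    · exact DL_eq_zero_of_eqOn hΩ hx hharm
    · rw [← neg_eq_zero, ← DR_DLR_eq_neg_DL_lap hψ hΩ hu hx]
      exact DR_eq_zero_of_eqOn hΩ hx hinfra
  rw [lameNavier_eq_smul_DL_lap hψ hΩ hu hx (mul_div_cancel₀ β hα) hw, hDL_lap, smul_zero]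

/-- if `u` is harmonic or `(φ,ψ)`-inframonogenic, then
`w = uψ∂ - (β/α)ψ∂u` solves `α(φ∂ w ψ∂) + β(φ∂ψ∂ w) = 0`. -/
theorem stmt16 (φ ψ : Fin 3 → V3) (hφ : StructuralSet φ) (hψ : StructuralSet ψ)
    (α β : ℝ) (hα : α ≠ 0) (hαβ : α ^ 2 ≠ β ^ 2)
    (Ω : Set V3) (hΩ : IsOpen Ω) (u : V3 → Cl3) (hu : ContDiffOn ℝ 3 u Ω)
    (hcase : (∀ x ∈ Ω, lap u x = 0) ∨ (∀ x ∈ Ω, DLR φ ψ u x = 0))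
    (w : V3 → Cl3) (hw : w = fun x => DR ψ u x - (β / α) • DL ψ u x) :
    ∀ x ∈ Ω, α • DLR φ ψ w x + β • DL φ (DL ψ w) x = 0 :=
  stmt16_general φ ψ hψ α β hα Ω hΩ u hu hcase w hw
end
end

section
/- The ℝ_{0,3}-valued function g(x) = (1/2)x₁² + (1/2)x₂² + √2·x₁x₂ + (e₃e₁ − 1)x₃² satisfies φ∂ g ψ∂ = 0 on ℝ³ for the structural sets φ = {e₁, e₃, e₂} and ψ = {(√2/2)(e₁+e₃), (√2/2)(e₁−e₃), e₂}, yet its scalar part [g]₀ and its bivector part [g]₂ are not (φ,ψ)-inframonogenic: φ∂[g]₀ψ∂ = 2e₃e₁ ≠ 0 and φ∂[g]₂ψ∂ = −2e₃e₁ ≠ 0. -/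
noncomputable section

/-!
Each of `g`, `[g]₀`, `[g]₂` has the form `x ↦ Σₖₗ xₖ xₗ Cₖₗ` for a constant matrix `C` over
`ℝ_{0,3}`, so its second partials are the constants `∂ᵢ∂ⱼ = Cᵢⱼ + Cⱼᵢ` and
`φ∂ f ψ∂ = Σᵢⱼ φⁱ (Cᵢⱼ + Cⱼᵢ) ψʲ` is additive in `C`. For the scalar part this sum is a real
combination of the products `φⁱψʲ`, which collapses to `2e₃e₁`; for the bivector part it is
`2 e₂(e₃e₁)e₂ = -2e₃e₁`, as `e₂` commutes with `e₃e₁` and squares to `-1`. Since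
`g = [g]₀ + [g]₂`, the two contributions cancel. Finally `e₃e₁ ≠ 0` because `(e₃e₁)² = -1`.
-/

open Matrix

lemma pd_continuousLinearMap (L : V3 →L[ℝ] Cl3) (i : Fin 3) (x : V3) :
    pd i L x = L (Pi.single i 1) := by
  simp [pd, L.fderiv]

lemma pd_bilinear_diag (B : V3 →L[ℝ] V3 →L[ℝ] Cl3) (j : Fin 3) :
    pd j (fun x => B x x) = ⇑(B.flip (Pi.single j 1) + B (Pi.single j 1)) := by
  funext x
  have h : HasFDerivAt (fun y => B y y)
      (B.precompR V3 x (.id ℝ V3) + B.precompL V3 (.id ℝ V3) x) x :=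
    B.hasFDerivAt_of_bilinear (hasFDerivAt_id x) (hasFDerivAt_id x)
  simp [pd, h.fderiv]

lemma pd_pd_bilinear_diag (B : V3 →L[ℝ] V3 →L[ℝ] Cl3) (i j : Fin 3) (x : V3) :
    pd i (pd j fun x => B x x) x
      = B (Pi.single i 1) (Pi.single j 1) + B (Pi.single j 1) (Pi.single i 1) := by
  rw [pd_bilinear_diag, pd_continuousLinearMap]
  simp

def coordForm (C : Matrix (Fin 3) (Fin 3) Cl3) : V3 →L[ℝ] V3 →L[ℝ] Cl3 :=
  ∑ k, ∑ l, (ContinuousLinearMap.proj k).smulRight ((ContinuousLinearMap.proj l).smulRight (C k l))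

lemma coordForm_apply (C : Matrix (Fin 3) (Fin 3) Cl3) (x y : V3) :
    coordForm C x y = ∑ k, ∑ l, (x k * y l) • C k l := by
  simp [coordForm, mul_smul]

lemma coordForm_single (C : Matrix (Fin 3) (Fin 3) Cl3) (i j : Fin 3) :
    coordForm C (Pi.single i 1) (Pi.single j 1) = C i j := by
  simp [coordForm_apply, Pi.single_apply]

lemma coordForm_add (C D : Matrix (Fin 3) (Fin 3) Cl3) (x y : V3) :
    coordForm (C + D) x y = coordForm C x y + coordForm D x y := by
  simp only [coordForm_apply, Matrix.add_apply, smul_add, Finset.sum_add_distrib]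

lemma DLR_coordForm (φ ψ : Fin 3 → V3) (C : Matrix (Fin 3) (Fin 3) Cl3) (x : V3) :
    DLR φ ψ (fun x => coordForm C x x) x = ∑ i, ∑ j, ι3 (φ i) * (C + Cᵀ) i j * ι3 (ψ j) := by
  simp only [DLR, pd_pd_bilinear_diag, coordForm_single, Matrix.add_apply, transpose_apply]

lemma DLR_coordForm_add (φ ψ : Fin 3 → V3) (C D : Matrix (Fin 3) (Fin 3) Cl3) (x : V3) :
    DLR φ ψ (fun x => coordForm (C + D) x x) x
      = DLR φ ψ (fun x => coordForm C x x) x + DLR φ ψ (fun x => coordForm D x x) x := by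
  simp only [DLR_coordForm, transpose_add, Matrix.add_apply, mul_add, add_mul,
    ← Finset.sum_add_distrib]
  congr! 2 with i - j -
  abel

lemma polar_Q3 (m n : V3) : QuadraticMap.polar Q3 m n = -2 * (m ⬝ᵥ n) := by
  simp [QuadraticMap.polar, Q3, QuadraticMap.weightedSumSquares_apply, dotProduct,
    Fin.sum_univ_three]
  ring

lemma ι3_mul_ι3_add_swap (m n : V3) :
    ι3 m * ι3 n + ι3 n * ι3 m = algebraMap ℝ Cl3 (-2 * (m ⬝ᵥ n)) := by
  rw [← polar_Q3]
  exact CliffordAlgebra.ι_mul_ι_add_swap m n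

lemma structuralSet_of_orthonormal {ψ : Fin 3 → V3}
    (h : ∀ i j, ψ i ⬝ᵥ ψ j = if i = j then 1 else 0) : StructuralSet ψ := by
  intro i j
  rw [ι3_mul_ι3_add_swap, h]
  split_ifs <;> norm_num

namespace StructuralSet

variable {ψ : Fin 3 → V3}

lemma mul_self (h : StructuralSet ψ) (i : Fin 3) : ι3 (ψ i) * ι3 (ψ i) = -1 := by
  have := h i i
  rw [if_pos rfl, map_neg, map_ofNat, ← two_smul ℝ] at this
  refine smul_right_injective Cl3 (two_ne_zero (α := ℝ)) ?_
  simp only [this, smul_neg, two_smul]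
  norm_num

lemma mul_comm_of_ne (h : StructuralSet ψ) {i j : Fin 3} (hij : i ≠ j) :
    ι3 (ψ i) * ι3 (ψ j) = -(ι3 (ψ j) * ι3 (ψ i)) := by
  have := h i j
  rw [if_neg hij, map_zero] at this
  exact eq_neg_of_add_eq_zero_left this

lemma commute_mul_of_ne (h : StructuralSet ψ) {i j k : Fin 3} (hki : k ≠ i) (hkj : k ≠ j) :
    Commute (ι3 (ψ k)) (ι3 (ψ i) * ι3 (ψ j)) := by
  rw [Commute, SemiconjBy, ← mul_assoc, h.mul_comm_of_ne hki, neg_mul, mul_assoc,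
    h.mul_comm_of_ne hkj, mul_neg, neg_neg, mul_assoc]

lemma mul_mul_self_of_ne (h : StructuralSet ψ) {i j : Fin 3} (hij : i ≠ j) :
    (ι3 (ψ i) * ι3 (ψ j)) * (ι3 (ψ i) * ι3 (ψ j)) = -1 := by
  calc (ι3 (ψ i) * ι3 (ψ j)) * (ι3 (ψ i) * ι3 (ψ j))
      = -(ι3 (ψ i) * ι3 (ψ i)) * (ι3 (ψ j) * ι3 (ψ j)) := by
        rw [mul_assoc, ← mul_assoc (ι3 (ψ j)), h.mul_comm_of_ne hij.symm]
        noncomm_ring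
    _ = -1 := by rw [h.mul_self, h.mul_self]; noncomm_ring

lemma mul_ne_zero_of_ne (h : StructuralSet ψ) {i j : Fin 3} (hij : i ≠ j) :
    ι3 (ψ i) * ι3 (ψ j) ≠ 0 := by
  intro h0
  simpa [h0] using h.mul_mul_self_of_ne hij

end StructuralSet

/-- Indices are shifted: `basisVec i` is the paper's `eᵢ₊₁`. -/
def basisVec (i : Fin 3) : Cl3 := ι3 (Pi.single i 1)

lemma structuralSet_single : StructuralSet fun i => Pi.single i 1 :=
  structuralSet_of_orthonormal fun i j => by simp [Pi.single_apply, eq_comm]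

lemma basisVec_mul_self (i : Fin 3) : basisVec i * basisVec i = -1 :=
  structuralSet_single.mul_self i

lemma basisVec_mul_comm_of_ne {i j : Fin 3} (hij : i ≠ j) :
    basisVec i * basisVec j = -(basisVec j * basisVec i) :=
  structuralSet_single.mul_comm_of_ne hij

def φ₀ : Fin 3 → V3 := ![Pi.single 0 1, Pi.single 2 1, Pi.single 1 1]

def ψ₀ : Fin 3 → V3 := ![(Real.sqrt 2 / 2) • (Pi.single 0 1 + Pi.single 2 1),
  (Real.sqrt 2 / 2) • ((Pi.single 0 1 : V3) - Pi.single 2 1), Pi.single 1 1]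

lemma structuralSet_φ₀ : StructuralSet φ₀ :=
  structuralSet_of_orthonormal fun i j => by
    fin_cases i <;> fin_cases j <;> simp [φ₀, dotProduct, Fin.sum_univ_three]

lemma structuralSet_ψ₀ : StructuralSet ψ₀ :=
  structuralSet_of_orthonormal fun i j => by
    fin_cases i <;> fin_cases j <;> simp [ψ₀, dotProduct, Fin.sum_univ_three] <;> ring_nf <;>
      norm_num

lemma ι3_φ₀ (i : Fin 3) : ι3 (φ₀ i) = ![basisVec 0, basisVec 2, basisVec 1] i := by
  fin_cases i <;> rfl

lemma ι3_ψ₀ (i : Fin 3) : ι3 (ψ₀ i) = ![(Real.sqrt 2 / 2) • (basisVec 0 + basisVec 2),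
    (Real.sqrt 2 / 2) • (basisVec 0 - basisVec 2), basisVec 1] i := by
  fin_cases i <;> simp [ψ₀, basisVec]

def scalarCoeffs : Matrix (Fin 3) (Fin 3) Cl3 :=
  (!![1 / 2, Real.sqrt 2, 0; 0, 1 / 2, 0; 0, 0, -1] : Matrix (Fin 3) (Fin 3) ℝ).map
    (algebraMap ℝ Cl3)

def bivectorCoeffs : Matrix (Fin 3) (Fin 3) Cl3 := Matrix.single 2 2 (basisVec 2 * basisVec 0)

lemma coordForm_scalarCoeffs_apply (x : V3) :
    coordForm scalarCoeffs x x = algebraMap ℝ Cl3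
      ((1/2) * x 0 ^ 2 + (1/2) * x 1 ^ 2 + Real.sqrt 2 * (x 0 * x 1) - x 2 ^ 2) := by
  simp only [scalarCoeffs, one_div, coordForm_apply, map_apply, of_apply, cons_val',
    cons_val_fin_one, Algebra.algebraMap_eq_smul_one, Fin.sum_univ_three, Fin.isValue,
    cons_val_zero, cons_val_one, cons_val, zero_smul, smul_zero, add_zero, zero_add, neg_smul,
    one_smul, smul_neg]
  match_scalars
  ring

lemma coordForm_bivectorCoeffs_apply (x : V3) :
    coordForm bivectorCoeffs x x = (x 2 ^ 2) • (basisVec 2 * basisVec 0) := by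
  simp [coordForm_apply, Fin.sum_univ_three, bivectorCoeffs, Matrix.single_apply, sq]

lemma DLR_scalarCoeffs (x : V3) :
    DLR φ₀ ψ₀ (fun x => coordForm scalarCoeffs x x) x = (2 : ℝ) • (basisVec 2 * basisVec 0) := by
  rw [DLR_coordForm]
  simp only [ι3_φ₀, Fin.isValue, scalarCoeffs, one_div, Matrix.add_apply, map_apply, of_apply,
    cons_val', cons_val_fin_one, Algebra.algebraMap_eq_smul_one, transpose_apply, mul_add,
    Algebra.mul_smul_comm, mul_one, ι3_ψ₀, smul_add, smul_sub, add_mul, Algebra.smul_mul_assoc,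
    Fin.sum_univ_three, cons_val_zero, cons_val_one, mul_sub, cons_val, basisVec_mul_self,
    smul_neg, basisVec_mul_comm_of_ne (show (0 : Fin 3) ≠ 2 by decide), sub_neg_eq_add,
    zero_smul, neg_zero, sub_self, add_zero, zero_add, neg_smul, one_smul, neg_neg]
  match_scalars <;> ring_nf <;> norm_num

lemma DLR_bivectorCoeffs (x : V3) :
    DLR φ₀ ψ₀ (fun x => coordForm bivectorCoeffs x x) x
      = (-2 : ℝ) • (basisVec 2 * basisVec 0) := by
  have hcomm : Commute (basisVec 1) (basisVec 2 * basisVec 0) :=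
    structuralSet_single.commute_mul_of_ne (by decide) (by decide)
  rw [DLR_coordForm]
  simp only [ι3_φ₀, Fin.isValue, bivectorCoeffs, transpose_single, Matrix.add_apply,
    single_apply, ι3_ψ₀, smul_add, Fin.sum_univ_three, Fin.reduceEq, and_false, ↓reduceIte,
    add_zero, mul_zero, cons_val_zero, zero_mul, cons_val_one, Algebra.mul_smul_comm, smul_zero,
    and_true, cons_val, zero_add, neg_smul]
  rw [← two_smul ℝ, mul_smul_comm, smul_mul_assoc, hcomm.eq, mul_assoc, basisVec_mul_self]
  simp

/-- the counterexample `g(x) = x₁²/2 + x₂²/2 + √2 x₁x₂ + (e₃e₁ - 1)x₃²` is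
`(φ,ψ)`-inframonogenic for `φ = {e₁,e₃,e₂}`, `ψ = {√2/2(e₁+e₃), √2/2(e₁-e₃), e₂}`, but its
scalar part and bivector part are not: `φ∂[g]₀ψ∂ = 2e₃e₁ ≠ 0`, `φ∂[g]₂ψ∂ = -2e₃e₁ ≠ 0`. -/
theorem stmt19
    (e : Fin 3 → Cl3) (he : e = fun i => ι3 (Pi.single i 1))
    (φ ψ : Fin 3 → V3)
    (hφ : φ = ![Pi.single 0 1, Pi.single 2 1, Pi.single 1 1])
    (hψ : ψ = ![(Real.sqrt 2 / 2) • (Pi.single 0 1 + Pi.single 2 1),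
                (Real.sqrt 2 / 2) • ((Pi.single 0 1 : V3) - Pi.single 2 1),
                Pi.single 1 1])
    (g g0 g2 : V3 → Cl3)
    (hg : g = fun x => algebraMap ℝ Cl3 ((1/2) * x 0 ^ 2 + (1/2) * x 1 ^ 2
            + Real.sqrt 2 * (x 0 * x 1)) + (x 2 ^ 2) • (e 2 * e 0 - 1))
    (hg0 : g0 = fun x => algebraMap ℝ Cl3 ((1/2) * x 0 ^ 2 + (1/2) * x 1 ^ 2
            + Real.sqrt 2 * (x 0 * x 1) - x 2 ^ 2))
    (hg2 : g2 = fun x => (x 2 ^ 2) • (e 2 * e 0)) :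
    StructuralSet φ ∧ StructuralSet ψ ∧
    (∀ x, DLR φ ψ g x = 0) ∧
    (∀ x, DLR φ ψ g0 x = (2 : ℝ) • (e 2 * e 0)) ∧ (2 : ℝ) • (e 2 * e 0) ≠ 0 ∧
    (∀ x, DLR φ ψ g2 x = (-2 : ℝ) • (e 2 * e 0)) ∧ (-2 : ℝ) • (e 2 * e 0) ≠ 0 := by
  obtain rfl : e = basisVec := he
  obtain rfl : φ = φ₀ := hφ
  obtain rfl : ψ = ψ₀ := hψ
  obtain rfl : g0 = fun x => coordForm scalarCoeffs x x := by
    simp only [hg0, coordForm_scalarCoeffs_apply]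
  obtain rfl : g2 = fun x => coordForm bivectorCoeffs x x := by
    simp only [hg2, coordForm_bivectorCoeffs_apply]
  obtain rfl : g = fun x => coordForm (scalarCoeffs + bivectorCoeffs) x x := by
    simp only [hg, coordForm_add, coordForm_scalarCoeffs_apply, coordForm_bivectorCoeffs_apply]
    funext x
    rw [map_sub, Algebra.algebraMap_eq_smul_one (x 2 ^ 2), smul_sub]
    abel
  have hne : basisVec 2 * basisVec 0 ≠ 0 := structuralSet_single.mul_ne_zero_of_ne (by decide)
  refine ⟨structuralSet_φ₀, structuralSet_ψ₀, fun x => ?_, DLR_scalarCoeffs,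
    smul_ne_zero two_ne_zero hne, DLR_bivectorCoeffs, smul_ne_zero (by norm_num) hne⟩
  rw [DLR_coordForm_add, DLR_scalarCoeffs, DLR_bivectorCoeffs, neg_smul, add_neg_cancel]
end
end
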